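/- Let S_n = K_{1,n} be the star with n ≥ 3 leaves. Then the geodetic hull number of the complementary prism S_n\bar{S}_n equals n+1. -/

import Mathlib

open SimpleGraph

/-- The geodetic closed interval `I[u,v]`: `u`, `v`, and all vertices lying on
some shortest `u`–`v` path. -/
def geoInterval {V : Type*} (G : SimpleGraph V) (u v : V) : Set V :=
  {w | w = u ∨ w = v ∨ (G.Reachable u v ∧ G.dist u w + G.dist w v = G.dist u v)}

/-- A set is geodetically convex if it is closed under intervals. -/
def IsGeoConvex {V : Type*} (G : SimpleGraph V) (S : Set V) : Prop :=
  ∀ u ∈ S, ∀ v ∈ S, geoInterval G u v ⊆ S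

/-- The geodetic convex hull: the smallest convex set containing `S`. -/
def geoHull {V : Type*} (G : SimpleGraph V) (S : Set V) : Set V :=
  ⋂₀ {T | IsGeoConvex G T ∧ S ⊆ T}

/-- `S` is a hull set if its convex hull is the whole vertex set. -/
def IsHullSet {V : Type*} (G : SimpleGraph V) (S : Set V) : Prop :=
  geoHull G S = Set.univ

/-- The geodetic hull number: minimum cardinality of a hull set. -/
noncomputable def hullNumber {V : Type*} (G : SimpleGraph V) : ℕ :=
  sInf {n | ∃ S : Set V, S.ncard = n ∧ IsHullSet G S}

/-- A vertex is simplicial if its closed neighborhood induces a clique. -/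
def IsSimplicial {V : Type*} (G : SimpleGraph V) (v : V) : Prop :=
  ∀ a ∈ G.neighborSet v, ∀ b ∈ G.neighborSet v, a ≠ b → G.Adj a b

/-- The complementary prism `G G̅`: disjoint union of `G` (left copies) and its
complement (right copies), plus a perfect matching between corresponding vertices. -/
def compPrism {V : Type*} (G : SimpleGraph V) : SimpleGraph (V ⊕ V) where
  Adj x y :=
    match x, y with
    | .inl u, .inl w => G.Adj u w
    | .inr u, .inr w => u ≠ w ∧ ¬ G.Adj u w
    | .inl u, .inr w => u = w
    | .inr u, .inl w => u = w
  symm := by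
    constructor
    rintro (u | u) (w | w) h
    · exact h.symm
    · exact h.symm
    · exact h.symm
    · exact ⟨h.1.symm, fun a => h.2 a.symm⟩
  loopless := by
    constructor
    rintro (u | u) h
    · exact G.loopless.irrefl u h
    · exact h.1 rfl

/-- The star `K_{1,n}` with center `0` and `n` leaves. -/
def starGraph (n : ℕ) : SimpleGraph (Fin (n + 1)) where
  Adj i j := i ≠ j ∧ (i = 0 ∨ j = 0)
  symm := ⟨fun i j h => ⟨h.1.symm, h.2.symm⟩⟩
  loopless := ⟨fun i h => h.1 rfl⟩

/-!
The pendant vertex `ū_0` and, for each leaf `u_i`, the pair `{u_i, ū_i}` have geodetically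
convex complements, so a hull set must contain `ū_0` and meet each of the `n` pairs: it has at
least `n + 1` vertices. Conversely the copy of `S̄_n` is a hull set, because `u_j` and `u_0` lie
on the geodesic `ū_j u_j u_0 ū_0` for any leaf `u_j`.
-/

open Function

section GeodeticHull

variable {V : Type*} {G : SimpleGraph V} {S T : Set V}

lemma subset_geoHull (G : SimpleGraph V) (S : Set V) : S ⊆ geoHull G S :=
  fun _ hx => Set.mem_sInter.mpr fun _ hT => hT.2 hx

lemma isGeoConvex_geoHull (G : SimpleGraph V) (S : Set V) : IsGeoConvex G (geoHull G S) :=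
  fun u hu v hv _ hw => Set.mem_sInter.mpr fun T hT =>
    hT.1 u (Set.mem_sInter.mp hu T hT) v (Set.mem_sInter.mp hv T hT) hw

lemma geoHull_min (hT : IsGeoConvex G T) (hST : S ⊆ T) : geoHull G S ⊆ T :=
  fun _ hx => Set.mem_sInter.mp hx T ⟨hT, hST⟩

lemma IsHullSet.eq_univ_of_subset (hS : IsHullSet G S) (hT : IsGeoConvex G T) (hST : S ⊆ T) :
    T = Set.univ :=
  Set.eq_univ_of_univ_subset (hS ▸ geoHull_min hT hST)

lemma IsHullSet.nat_card_le_ncard [Finite V] (hS : IsHullSet G S) {ι : Type*} {A : ι → Set V}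
    (hne : ∀ i, (A i).Nonempty) (hdisj : Pairwise (Disjoint on A))
    (hconv : ∀ i, IsGeoConvex G (A i)ᶜ) : Nat.card ι ≤ S.ncard := by
  have hmeet : ∀ i, ∃ x, x ∈ S ∧ x ∈ A i := by
    intro i
    by_contra! hSA
    obtain ⟨x, hx⟩ := hne i
    exact Set.eq_univ_iff_forall.mp (hS.eq_univ_of_subset (hconv i) hSA) x hx
  choose f hfS hfA using hmeet
  have hf : Injective f := fun i j hij => by
    by_contra hij'
    exact Set.disjoint_left.mp (hdisj hij') (hfA i) (hij ▸ hfA j)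
  calc Nat.card ι = (Set.range f).ncard := (Set.ncard_range_of_injective hf).symm
    _ ≤ S.ncard := Set.ncard_le_ncard (Set.range_subset_iff.mpr hfS)

lemma hullNumber_eq {k : ℕ} (hS : IsHullSet G S) (hk : S.ncard = k)
    (hmin : ∀ T, IsHullSet G T → k ≤ T.ncard) : hullNumber G = k :=
  le_antisymm (Nat.sInf_le ⟨S, hk, hS⟩)
    (le_csInf ⟨k, S, hk, hS⟩ fun _ ⟨T, hT, hTS⟩ => hT ▸ hmin T hTS)

end GeodeticHull

namespace SimpleGraph

variable {V : Type*} {G : SimpleGraph V} {u v w : V}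

lemma dist_eq_two_of_adj_of_adj (huw : G.Adj u w) (hwv : G.Adj w v) (huv : u ≠ v)
    (hnadj : ¬G.Adj u v) : G.dist u v = 2 := by
  have hle : G.dist u v ≤ 2 := by simpa using dist_le (huw.toWalk.append hwv.toWalk)
  have hpos : 0 < G.dist u v := (huw.reachable.trans hwv.reachable).pos_dist_of_ne huv
  have hne1 : G.dist u v ≠ 1 := fun h => hnadj (dist_eq_one_iff_adj.mp h)
  omega

lemma dist_eq_dist_add_one_of_neighborSet_eq_singleton (hN : G.neighborSet u = {w})
    (hvu : v ≠ u) (hwv : G.Reachable w v) : G.dist u v = G.dist w v + 1 := by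
  have huw : G.Adj u w := (Set.ext_iff.mp hN w).mpr rfl
  refine le_antisymm ?_ ?_
  · calc G.dist u v ≤ G.dist u w + G.dist w v := hwv.dist_triangle_right u
      _ = G.dist w v + 1 := by rw [dist_eq_one_iff_adj.mpr huw, add_comm]
  · obtain ⟨p, hp⟩ := (huw.reachable.trans hwv).exists_walk_length_eq_dist
    obtain ⟨x, hux, q, rfl⟩ := Walk.exists_eq_cons_of_ne hvu.symm p
    obtain rfl : x = w := (Set.ext_iff.mp hN x).mp hux
    rw [← hp, Walk.length_cons]
    exact Nat.add_le_add_right (dist_le q) 1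

end SimpleGraph

/-- The complementary prism `S_n S̄_n`: `inl i` is the vertex `u_i` of the star, `inr i` its copy
`ū_i` in the complement. -/
abbrev starPrism (n : ℕ) : SimpleGraph (Fin (n + 1) ⊕ Fin (n + 1)) :=
  compPrism (_root_.starGraph n)

namespace StarPrism

open Sum

variable {n : ℕ} {a b j : Fin (n + 1)}

@[simp] lemma adj_inl_inl : (starPrism n).Adj (inl a) (inl b) ↔ a ≠ b ∧ (a = 0 ∨ b = 0) := .rfl

@[simp] lemma adj_inl_inr : (starPrism n).Adj (inl a) (inr b) ↔ a = b := .rfl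

@[simp] lemma adj_inr_inl : (starPrism n).Adj (inr a) (inl b) ↔ a = b := .rfl

@[simp] lemma adj_inr_inr : (starPrism n).Adj (inr a) (inr b) ↔ a ≠ b ∧ a ≠ 0 ∧ b ≠ 0 := by
  change a ≠ b ∧ ¬(a ≠ b ∧ (a = 0 ∨ b = 0)) ↔ _
  tauto

lemma neighborSet_inr_zero : (starPrism n).neighborSet (inr 0) = {inl 0} := by
  ext (x | x) <;> simp [eq_comm]

def distFormula : Fin (n + 1) ⊕ Fin (n + 1) → Fin (n + 1) ⊕ Fin (n + 1) → ℕ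
  | inl a, inl b => if a = b then 0 else if a = 0 ∨ b = 0 then 1 else 2
  | inl a, inr b | inr b, inl a => if a = b then 1 else 2
  | inr a, inr b => if a = b then 0 else if a = 0 ∨ b = 0 then 3 else 1

open SimpleGraph

lemma dist_inl_inl :
    (starPrism n).dist (inl a) (inl b) = if a = b then 0 else if a = 0 ∨ b = 0 then 1 else 2 := by
  split_ifs with hab h0
  · simp [hab]
  · exact dist_eq_one_iff_adj.mpr (adj_inl_inl.mpr ⟨hab, h0⟩)
  · push Not at h0
    exact dist_eq_two_of_adj_of_adj (w := inl 0) (by simp [h0.1]) (by simp [Ne.symm h0.2])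
      (by simpa using hab) (by simp [h0.1, h0.2])

lemma dist_inl_inr : (starPrism n).dist (inl a) (inr b) = if a = b then 1 else 2 := by
  split_ifs with hab
  · exact dist_eq_one_iff_adj.mpr (adj_inl_inr.mpr hab)
  have hnadj : ¬(starPrism n).Adj (inl a) (inr b) := by simpa using hab
  by_cases ha : a = 0
  · subst ha
    exact dist_eq_two_of_adj_of_adj (w := inl b) (by simpa using hab) rfl (by simp) hnadj
  by_cases hb : b = 0
  · subst hb
    exact dist_eq_two_of_adj_of_adj (w := inl 0) (by simpa using hab) rfl (by simp) hnadj
  · exact dist_eq_two_of_adj_of_adj (w := inr a) rfl (by simp [hab, ha, hb]) (by simp) hnadj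

lemma dist_inr_zero_inr (hb : b ≠ 0) : (starPrism n).dist (inr 0) (inr b) = 3 := by
  have hd : (starPrism n).dist (inl 0) (inr b) = 2 := by simpa [dist_inl_inr] using hb.symm
  rw [dist_eq_dist_add_one_of_neighborSet_eq_singleton neighborSet_inr_zero (by simpa using hb)
    (Reachable.of_dist_ne_zero (by omega)), hd]

lemma dist_inr_inr :
    (starPrism n).dist (inr a) (inr b) = if a = b then 0 else if a = 0 ∨ b = 0 then 3 else 1 := by
  split_ifs with hab h0
  · simp [hab]
  · rcases h0 with rfl | rfl
    · exact dist_inr_zero_inr (Ne.symm hab)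
    · rw [dist_comm]
      exact dist_inr_zero_inr hab
  · push Not at h0
    exact dist_eq_one_iff_adj.mpr (adj_inr_inr.mpr ⟨hab, h0⟩)

lemma dist_eq_distFormula (x y : Fin (n + 1) ⊕ Fin (n + 1)) :
    (starPrism n).dist x y = distFormula x y := by
  rcases x with a | a <;> rcases y with b | b
  · exact dist_inl_inl
  · exact dist_inl_inr
  · rw [dist_comm, dist_inl_inr]
    simp only [distFormula]
  · exact dist_inr_inr

/-- The blocks `{ū_0}` and `{u_i, ū_i}` for `i ≠ 0`. -/
def block (i : Fin (n + 1)) : Set (Fin (n + 1) ⊕ Fin (n + 1)) :=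
  {x | x ≠ inl 0 ∧ x.elim id id = i}

lemma inr_mem_block (i : Fin (n + 1)) : inr i ∈ block i := by
  simp [block]

lemma pairwise_disjoint_block : Pairwise (Disjoint on block (n := n)) :=
  fun _ _ hij => Set.disjoint_left.mpr fun _ hi hj => hij (hi.2.symm.trans hj.2)

lemma isGeoConvex_compl_block (i : Fin (n + 1)) : IsGeoConvex (starPrism n) (block i)ᶜ := by
  rintro x hx y hy z (rfl | rfl | ⟨-, hxzy⟩) hz
  · exact hx hz
  · exact hy hz
  simp only [dist_eq_distFormula] at hxzy
  simp only [block, Set.mem_compl_iff, Set.mem_ofPred_eq, not_and] at hx hy hz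
  rcases x with a | a <;> rcases y with b | b <;> rcases z with c | c <;>
    simp only [elim_inl, elim_inr, id, ne_eq, inl.injEq, reduceCtorEq, not_false_eq_true,
      true_implies] at hx hy hz <;>
    simp only [distFormula] at hxzy <;>
    split_ifs at hxzy <;> omega

lemma inl_mem_geoInterval_inr_inr_zero (hj : j ≠ 0) (ha : a = j ∨ a = 0) :
    inl a ∈ geoInterval (starPrism n) (inr j) (inr 0) := by
  have hd : (starPrism n).dist (inr j) (inr 0) = 3 := by simp [dist_eq_distFormula, distFormula, hj]
  refine .inr (.inr ⟨Reachable.of_dist_ne_zero (by omega), ?_⟩)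
  rcases ha with rfl | rfl <;> simp [dist_eq_distFormula, distFormula, hj, hj.symm]

lemma isHullSet_range_inr (hn : n ≠ 0) : IsHullSet (starPrism n) (Set.range inr) := by
  have hS : ∀ b : Fin (n + 1), inr b ∈ geoHull (starPrism n) (Set.range inr) :=
    fun b => subset_geoHull _ _ ⟨b, rfl⟩
  have hI : ∀ j : Fin (n + 1),
      geoInterval (starPrism n) (inr j) (inr 0) ⊆ geoHull (starPrism n) (Set.range inr) :=
    fun j => isGeoConvex_geoHull _ _ _ (hS j) _ (hS 0)
  refine Set.eq_univ_of_forall ?_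
  rintro (a | a)
  · by_cases ha : a = 0
    · subst ha
      have hlast : Fin.last n ≠ 0 := by simpa [Fin.ext_iff] using hn
      exact hI _ (inl_mem_geoInterval_inr_inr_zero hlast (.inr rfl))
    · exact hI a (inl_mem_geoInterval_inr_inr_zero ha (.inl rfl))
  · exact hS a

lemma le_ncard_of_isHullSet {S : Set (Fin (n + 1) ⊕ Fin (n + 1))}
    (hS : IsHullSet (starPrism n) S) : n + 1 ≤ S.ncard := by
  simpa using hS.nat_card_le_ncard (fun i => ⟨_, inr_mem_block i⟩) pairwise_disjoint_block
    isGeoConvex_compl_block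

end StarPrism

theorem hullNumber_compPrism_star (n : ℕ) (hn : 3 ≤ n) :
    hullNumber (compPrism (_root_.starGraph n)) = n + 1 :=
  hullNumber_eq (StarPrism.isHullSet_range_inr (by omega))
    (by simp [Set.ncard_range_of_injective Sum.inr_injective])
    fun _ => StarPrism.le_ncard_of_isHullSet
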